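/- Assume K is both a ℚ-algebra and an integral domain, let χ = (χ_d)_{d≥1} be an ω-invariant sequence of characters, and let E be a free K-module with finite basis (e_ℓ)_{ℓ=1}^n. Then: (i) the family (e_j), where j runs over J(χ,n) = ∪_{d≥0} J(χ_d,n,d) (with e_∅ = 1 in degree 0), is a basis of the K-module [χ](E); (ii) for j ∈ J(χ_d,n,d) and k ∈ J(χ_e,n,e), the multiplication of the algebra [χ](E) satisfies e_j·e_k = 0 if the concatenated multi-index (j,k) ∈ [1,n]^{d+e} lies in I₀(χ_{d+e},n,d+e), and e_j·e_k = ζ(j,k)·e_{ℓm(j,k)} if (j,k) ∈ I(χ_{d+e},n,d+e). -/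

import Mathlib

noncomputable section

open scoped TensorProduct DirectSum

/-- The subgroup of permutations of `ℕ` fixing every `n ≥ d`
(the symmetric group `S_d` inside `S_∞`, in 0-indexed form). -/
def Sfin (d : ℕ) : Subgroup (Equiv.Perm ℕ) where
  carrier := {σ | ∀ n, d ≤ n → σ n = n}
  one_mem' := fun _ _ => rfl
  mul_mem' := by
    intro a b ha hb n hn
    simp only [Equiv.Perm.mul_apply]
    rw [hb n hn, ha n hn]
  inv_mem' := by
    intro a ha n hn
    have h1 : a n = n := ha n hn
    calc a⁻¹ n = a⁻¹ (a n) := by rw [h1]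
    _ = n := Equiv.symm_apply_apply a n

/-- The shift `ω` of a finitary permutation of `ℕ`:
`(ω σ) 0 = 0` and `(ω σ) (m+1) = σ m + 1`. -/
def omegaPerm (σ : Equiv.Perm ℕ) : Equiv.Perm ℕ where
  toFun := fun n => match n with
    | 0 => 0
    | m + 1 => σ m + 1
  invFun := fun n => match n with
    | 0 => 0
    | m + 1 => σ⁻¹ m + 1
  left_inv := by
    intro n
    cases n with
    | zero => rfl
    | succ m => simp
  right_inv := by
    intro n
    cases n with
    | zero => rfl
    | succ m => simp

/-- `ω` as an (injective) monoid endomorphism of `S_∞`. -/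
def omegaHom : Equiv.Perm ℕ →* Equiv.Perm ℕ where
  toFun := omegaPerm
  map_one' := by
    ext n
    cases n <;> rfl
  map_mul' := by
    intro a b
    ext n
    cases n <;> rfl

/-- An `ω`-invariant sequence of `K`-valued linear characters
`χ_d : W_d → U(K)` on an `ω`-stable sequence of permutation groups
`W_d ≤ S_d` (indexed over all `d : ℕ`, 0-indexed). -/
structure OmegaSeq (K : Type*) [CommRing K] where
  W : ℕ → Subgroup (Equiv.Perm ℕ)
  W_le : ∀ d, W d ≤ Sfin d
  mono : ∀ d, W d ≤ W (d + 1)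
  omega_mem : ∀ d, ∀ σ ∈ W d, omegaHom σ ∈ W (d + 1)
  χ : ∀ d, W d →* Kˣ
  χ_res : ∀ d (σ : Equiv.Perm ℕ) (h : σ ∈ W d),
    χ (d + 1) ⟨σ, mono d h⟩ = χ d ⟨σ, h⟩
  χ_omega : ∀ d (σ : Equiv.Perm ℕ) (h : σ ∈ W d),
    χ (d + 1) ⟨omegaHom σ, omega_mem d σ h⟩ = χ d ⟨σ, h⟩

lemma Sfin.apply_lt {d : ℕ} {σ : Equiv.Perm ℕ} (h : σ ∈ Sfin d) {x : ℕ}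
    (hx : x < d) : σ x < d := by
  have h' : ∀ n, d ≤ n → σ n = n := h
  by_contra hge
  push_neg at hge
  have h1 : σ (σ x) = σ x := h' (σ x) hge
  have h2 : σ x = x := σ.injective h1
  rw [h2] at hge
  omega

/-- The restriction of a permutation `σ ∈ S_d ≤ S_∞` to a permutation
of `Fin d`. -/
def restrictFin {d : ℕ} (σ : Equiv.Perm ℕ) (h : σ ∈ Sfin d) :
    Equiv.Perm (Fin d) where
  toFun x := ⟨σ x, Sfin.apply_lt h x.2⟩
  invFun x := ⟨σ⁻¹ x, Sfin.apply_lt (inv_mem h) x.2⟩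
  left_inv x := by
    ext
    simp
  right_inv x := by
    ext
    simp

/-- The action of a permutation `σ` of `Fin d` on the `d`-th tensor power
`T^d(E)`, determined by `σ • (x₁ ⊗ ⋯ ⊗ x_d) = x_{σ⁻¹(1)} ⊗ ⋯ ⊗ x_{σ⁻¹(d)}`. -/
def permAct (K : Type*) [CommRing K] (E : Type*) [AddCommGroup E] [Module K E]
    (d : ℕ) (σ : Equiv.Perm (Fin d)) :
    (⨂[K] (_ : Fin d), E) ≃ₗ[K] ⨂[K] (_ : Fin d), E :=
  PiTensorProduct.reindex K (fun _ : Fin d => E) σ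

/-- The permutation of `Fin d` induced by `σ ∈ W_d`. -/
def rAct {K : Type*} [CommRing K] (S : OmegaSeq K) (d : ℕ) (σ : S.W d) :
    Equiv.Perm (Fin d) :=
  restrictFin (σ : Equiv.Perm ℕ) (S.W_le d σ.2)

/-- The submodule `_{χ_d⁻¹}T^d(E)` of `T^d(E)`, generated by the elements
`χ_d⁻¹(σ) z − σ z`, `σ ∈ W_d`. -/
def seqKer {K : Type*} [CommRing K] (S : OmegaSeq K)
    (E : Type*) [AddCommGroup E] [Module K E] (d : ℕ) :
    Submodule K (⨂[K] (_ : Fin d), E) :=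
  Submodule.span K {w | ∃ (σ : S.W d) (z : ⨂[K] (_ : Fin d), E),
    w = (((S.χ d σ)⁻¹ : Kˣ) : K) • z - permAct K E d (rAct S d σ) z}

/-- The `d`-th semi-symmetric power `[χ_d]^d(E) = T^d(E)/_{χ_d⁻¹}T^d(E)`. -/
abbrev Qpow {K : Type*} [CommRing K] (S : OmegaSeq K)
    (E : Type*) [AddCommGroup E] [Module K E] (d : ℕ) :=
  (⨂[K] (_ : Fin d), E) ⧸ seqKer S E d

/-- The semi-symmetric algebra `[χ](E) = ⨁_{d ≥ 0} [χ_d]^d(E)` of weight `χ`,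
as a graded `K`-module. -/
abbrev SemiAlg {K : Type*} [CommRing K] (S : OmegaSeq K)
    (E : Type*) [AddCommGroup E] [Module K E] :=
  ⨁ d : ℕ, Qpow S E d

/-- The decomposable `d-χ`-vector `x₁ χ ⋯ χ x_d` as an element of the
semi-symmetric algebra. -/
def decEl {K : Type*} [CommRing K] (S : OmegaSeq K)
    {E : Type*} [AddCommGroup E] [Module K E] (d : ℕ) (x : Fin d → E) :
    SemiAlg S E :=
  DirectSum.lof K ℕ (fun d => Qpow S E d) d
    (Submodule.Quotient.mk (PiTensorProduct.tprod K x))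

/-- Strict lexicographic comparison of functions. -/
def lexLT {ι : Type*} [LT ι] {α : Type*} [LT α] (f g : ι → α) : Prop :=
  Pi.Lex (· < ·) (fun {_} => (· < ·)) f g

/-- The multi-index `i ∈ [1,n]^d` lies in `I(χ_d,n,d)`: the character `χ_d`
is trivial on the stabilizer `W_i` (for the action `(σ i)_t = i_{σ⁻¹(t)}`). -/
def seqStabTriv {K : Type*} [CommRing K] (S : OmegaSeq K) (n d : ℕ)
    (i : Fin d → Fin n) : Prop :=
  ∀ σ : S.W d, i ∘ ⇑((rAct S d σ)⁻¹) = i → S.χ d σ = 1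

/-- The set `J(χ_d,n,d)` of multi-indices in `I(χ_d,n,d)` that are
lexicographically minimal in their `W_d`-orbit. -/
def seqJset {K : Type*} [CommRing K] (S : OmegaSeq K) (n d : ℕ) :
    Set (Fin d → Fin n) :=
  {i | seqStabTriv S n d i ∧ ∀ σ : S.W d, ¬ lexLT (i ∘ ⇑((rAct S d σ)⁻¹)) i}

/-!
The defining relations say `e_i ≡ χ(σ) e_{σ i}` modulo `_{χ⁻¹}T^d(E)`, so every `e_i` is a multiple
of `e_{ℓm(i)}`, and it vanishes when `χ` is nontrivial on the stabilizer of `i`: averaging the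
relations over that stabilizer gives `|W_i| e_i ≡ (∑_{σ ∈ W_i} χ(σ)) e_i = 0`, and `|W_i|` is
invertible in a `ℚ`-algebra. Hence the `e_j`, `j ∈ J`, span. They are independent because the
averaging map `e_i ↦ ∑_σ χ(σ) e_{σ i}`, followed by the projection onto the coordinates in `J`,
kills the relations and sends `e_j` to `|W_j| e_j`.
-/

section lexLT

variable {ι α : Type*}

lemma eq_of_not_lexLT_of_not_lexLT [LinearOrder ι] [WellFoundedLT ι] [LinearOrder α]
    {f g : ι → α} (hfg : ¬ lexLT f g) (hgf : ¬ lexLT g f) : f = g :=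
  toLex.injective (le_antisymm (not_lt.1 hgf) (not_lt.1 hfg))

lemma wellFounded_lexLT [LinearOrder ι] [Finite ι] [LT α] [WellFoundedLT α] :
    WellFounded (lexLT : (ι → α) → (ι → α) → Prop) :=
  Pi.Lex.wellFounded _ fun _ => wellFounded_lt

end lexLT

lemma Fin.append_comp {α β : Type*} {d e : ℕ} (f : α → β) (u : Fin d → α) (v : Fin e → α) :
    Fin.append (fun t => f (u t)) (fun t => f (v t)) = fun t => f (Fin.append u v t) := by
  funext t
  refine Fin.addCases (fun t => ?_) (fun t => ?_) t <;> simp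

lemma DFinsupp.basis_apply {ι R : Type*} [Semiring R] [DecidableEq ι] {M η : ι → Type*}
    [∀ i, AddCommMonoid (M i)] [∀ i, Module R (M i)] (b : ∀ i, Module.Basis (η i) R (M i))
    (p : Σ i, η i) : DFinsupp.basis b p = DFinsupp.single p.1 (b p.1 p.2) := by
  rw [Module.Basis.apply_eq_iff]
  simp [DFinsupp.basis, Equiv.symm_apply_eq, sigmaFinsuppEquivDFinsupp_single]

lemma isUnit_natCast_of_algebraRat {K : Type*} [Semiring K] [Algebra ℚ K] {m : ℕ} (hm : m ≠ 0) :
    IsUnit (m : K) := by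
  simpa using (isUnit_iff_ne_zero.2 (Nat.cast_ne_zero.2 hm : (m : ℚ) ≠ 0)).map (algebraMap ℚ K)

namespace OmegaSeq

open PiTensorProduct Finset

variable {K : Type*} [CommRing K] (S : OmegaSeq K) (d : ℕ)

lemma rAct_injective : Function.Injective (rAct S d) := by
  intro σ τ h
  refine Subtype.ext (Equiv.ext fun m => ?_)
  by_cases hm : m < d
  · simpa [rAct, restrictFin] using congrArg (fun π => (π ⟨m, hm⟩ : ℕ)) h
  · rw [S.W_le d σ.2 m (not_lt.1 hm), S.W_le d τ.2 m (not_lt.1 hm)]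

instance : Fintype (S.W d) := Fintype.ofInjective _ (rAct_injective S d)

instance (n : ℕ) : MulAction (S.W d) (Fin d → Fin n) where
  smul σ i := i ∘ ⇑((rAct S d σ)⁻¹)
  one_smul _ := rfl
  mul_smul _ _ _ := rfl

variable {S d} {n : ℕ}

lemma smul_eq_self_of_mem_seqJset {j : Fin d → Fin n} (hj : j ∈ seqJset S n d) {σ : S.W d}
    (hσj : σ • j ∈ seqJset S n d) : σ • j = j := by
  have h : ¬ lexLT (σ⁻¹ • σ • j) (σ • j) := hσj.2 σ⁻¹
  rw [inv_smul_smul] at h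
  exact eq_of_not_lexLT_of_not_lexLT (hj.2 σ) h

variable {E : Type*} [AddCommGroup E] [Module K E] (b : Module.Basis (Fin n) K E)

lemma permAct_tprod_basis (σ : S.W d) (i : Fin d → Fin n) :
    permAct K E d (rAct S d σ) (tprod K fun t => b (i t)) = tprod K fun t => b ((σ • i) t) :=
  reindex_tprod _ _

lemma mk_eq_smul_mk_permAct (σ : S.W d) (z : ⨂[K] (_ : Fin d), E) :
    (Submodule.Quotient.mk z : Qpow S E d)
      = (S.χ d σ : K) • Submodule.Quotient.mk (permAct K E d (rAct S d σ) z) := by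
  rw [← Submodule.Quotient.mk_smul, Submodule.Quotient.eq]
  have hrel : (((S.χ d σ)⁻¹ : Kˣ) : K) • z - permAct K E d (rAct S d σ) z ∈ seqKer S E d :=
    Submodule.subset_span ⟨σ, z, rfl⟩
  convert Submodule.smul_mem _ (S.χ d σ : K) hrel using 1
  rw [smul_sub, smul_smul, Units.mul_inv, one_smul]

lemma mk_tprod_basis_eq_smul (σ : S.W d) (i : Fin d → Fin n) :
    (Submodule.Quotient.mk (tprod K fun t => b (i t)) : Qpow S E d)
      = (S.χ d σ : K) • Submodule.Quotient.mk (tprod K fun t => b ((σ • i) t)) := by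
  rw [mk_eq_smul_mk_permAct σ, permAct_tprod_basis]

lemma decEl_basis_eq_smul (σ : S.W d) (i : Fin d → Fin n) :
    decEl S d (fun t => b (i t)) = (S.χ d σ : K) • decEl S d fun t => b ((σ • i) t) := by
  rw [decEl, mk_tprod_basis_eq_smul b σ, map_smul]
  rfl

variable (S d) in
def avgJ (i : Fin d → Fin n) : seqJset S n d →₀ K :=
  ∑ σ : S.W d, (S.χ d σ : K) • (Finsupp.single (σ • i) 1).subtypeDomain (· ∈ seqJset S n d)

lemma avgJ_smul (τ : S.W d) (i : Fin d → Fin n) :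
    avgJ S d (τ • i) = (((S.χ d τ)⁻¹ : Kˣ) : K) • avgJ S d i := by
  rw [avgJ, avgJ, Finset.smul_sum]
  refine Fintype.sum_equiv (Equiv.mulRight τ) _ _ fun σ => ?_
  simp only [Equiv.coe_mulRight, smul_smul, map_mul, Units.val_mul]
  congr 1
  rw [mul_comm (S.χ d σ : K), ← mul_assoc, ← Units.val_mul, inv_mul_cancel, Units.val_one, one_mul]

lemma avgJ_of_mem {j : Fin d → Fin n} (hj : j ∈ seqJset S n d) :
    avgJ S d j = Finsupp.single ⟨j, hj⟩ (#{σ : S.W d | σ • j = j} : K) := by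
  have hterm : ∀ σ : S.W d,
      (S.χ d σ : K) • (Finsupp.single (σ • j) 1).subtypeDomain (· ∈ seqJset S n d)
        = if σ • j = j then Finsupp.single ⟨j, hj⟩ (1 : K) else 0 := by
    intro σ
    split_ifs with hσ
    · ext ⟨j', _⟩
      simp [hσ, hj.1 σ hσ, Finsupp.single_apply]
    · ext ⟨j', hj'⟩
      have hne : σ • j ≠ j' := fun h => hσ (smul_eq_self_of_mem_seqJset hj (h ▸ hj'))
      simp [hne]
  simp [avgJ, hterm, Finset.sum_ite]

variable (S d) in
def avgMap : (⨂[K] (_ : Fin d), E) →ₗ[K] (seqJset S n d →₀ K) :=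
  (Basis.piTensorProduct fun _ => b).constr K (avgJ S d)

lemma avgMap_tprod_basis (i : Fin d → Fin n) :
    avgMap S d b (tprod K fun t => b (i t)) = avgJ S d i := by
  have h := (Basis.piTensorProduct fun _ : Fin d => b).constr_basis K (avgJ S d) i
  rwa [Basis.piTensorProduct_apply] at h

lemma seqKer_le_ker_avgMap : seqKer S E d ≤ LinearMap.ker (avgMap S d b) := by
  have hperm (σ : S.W d) : (avgMap S d b).comp (permAct K E d (rAct S d σ)).toLinearMap
      = (((S.χ d σ)⁻¹ : Kˣ) : K) • avgMap S d b :=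
    (Basis.piTensorProduct fun _ => b).ext fun i => by
      simp [avgMap_tprod_basis, permAct_tprod_basis, avgJ_smul]
  rw [seqKer, Submodule.span_le]
  rintro _ ⟨σ, z, rfl⟩
  simpa [sub_eq_zero] using (LinearMap.congr_fun (hperm σ) z).symm

variable (S d) in
def mkJ (j : seqJset S n d) : Qpow S E d :=
  Submodule.Quotient.mk (tprod K fun t => b (j.1 t))

variable [Algebra ℚ K] [IsDomain K]

lemma mem_seqKer_of_forall_permAct_eq (H : Subgroup (S.W d)) (hχ : ∃ σ ∈ H, S.χ d σ ≠ 1)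
    {z : ⨂[K] (_ : Fin d), E} (hz : ∀ σ ∈ H, permAct K E d (rAct S d σ) z = z) :
    z ∈ seqKer S E d := by
  classical
  obtain ⟨σ₀, hσ₀H, hσ₀⟩ := hχ
  let χH : H →* K := (Units.coeHom K).comp ((S.χ d).comp H.subtype)
  have hχH : χH ≠ 1 := fun h =>
    hσ₀ (Units.ext (by simpa [χH] using DFunLike.congr_fun h ⟨σ₀, hσ₀H⟩))
  have hχH_sum : ∑ σ : H, (S.χ d σ : K) = 0 := sum_hom_units_eq_zero χH hχH
  have hsum : ∑ σ : H, (χH σ : K) • ((((S.χ d σ)⁻¹ : Kˣ) : K) • z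
      - permAct K E d (rAct S d σ) z) = (Fintype.card H : K) • z := by
    simp_rw [hz _ (SetLike.coe_mem _), smul_sub, smul_smul]
    simp [χH, ← Finset.sum_smul, hχH_sum, Nat.cast_smul_eq_nsmul]
  have hcard : IsUnit (Fintype.card H : K) :=
    isUnit_natCast_of_algebraRat (Fintype.card_pos_iff.2 ⟨1⟩).ne'
  rw [← Submodule.smul_mem_iff_of_isUnit _ hcard, ← hsum]
  exact Submodule.sum_mem _ fun σ _ => Submodule.smul_mem _ _ (Submodule.subset_span ⟨σ, z, rfl⟩)

lemma tprod_basis_mem_seqKer {i : Fin d → Fin n} (hi : ¬ seqStabTriv S n d i) :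
    (tprod K fun t => b (i t)) ∈ seqKer S E d := by
  refine mem_seqKer_of_forall_permAct_eq (MulAction.stabilizer (S.W d) i) ?_ fun σ hσ => ?_
  · by_contra! h
    exact hi fun σ hσ => h σ hσ
  · rw [permAct_tprod_basis, MulAction.mem_stabilizer_iff.1 hσ]

lemma decEl_basis_eq_zero {i : Fin d → Fin n} (hi : ¬ seqStabTriv S n d i) :
    decEl S d (fun t => b (i t)) = 0 := by
  rw [decEl, (Submodule.Quotient.mk_eq_zero _).2 (tprod_basis_mem_seqKer b hi), map_zero]

lemma linearIndependent_mkJ : LinearIndependent K (mkJ S d b) := by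
  refine .of_comp ((seqKer S E d).liftQ (avgMap S d b) (seqKer_le_ker_avgMap b)) ?_
  have hcomp : (seqKer S E d).liftQ (avgMap S d b) (seqKer_le_ker_avgMap b) ∘ mkJ S d b
      = fun j => Finsupp.single j (#{σ : S.W d | σ • j.1 = j.1} : K) := by
    funext j
    simp [mkJ, avgMap_tprod_basis, avgJ_of_mem j.2]
  rw [hcomp]
  exact Finsupp.linearIndependent_single_of_ne_zero fun j =>
    (isUnit_natCast_of_algebraRat (card_ne_zero_of_mem (by simp : (1 : S.W d) ∈ _))).ne_zero

lemma mk_tprod_basis_mem_span_mkJ (i : Fin d → Fin n) :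
    Submodule.Quotient.mk (tprod K fun t => b (i t))
      ∈ Submodule.span K (Set.range (mkJ S d b)) := by
  induction i using (wellFounded_lexLT (ι := Fin d) (α := Fin n)).induction with | _ i ih
  by_cases hI : seqStabTriv S n d i
  · by_cases hJ : ∀ σ : S.W d, ¬ lexLT (σ • i) i
    · exact Submodule.subset_span ⟨⟨i, hI, hJ⟩, rfl⟩
    · push Not at hJ
      obtain ⟨σ, hσ⟩ := hJ
      rw [mk_tprod_basis_eq_smul b σ]
      exact Submodule.smul_mem _ _ (ih _ hσ)
  · rw [(Submodule.Quotient.mk_eq_zero _).2 (tprod_basis_mem_seqKer b hI)]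
    exact zero_mem _

lemma span_mkJ_eq_top : Submodule.span K (Set.range (mkJ S d b)) = ⊤ := by
  rw [eq_top_iff, ← (seqKer S E d).range_mkQ, LinearMap.range_eq_map,
    ← (Basis.piTensorProduct fun _ => b).span_eq, Submodule.map_span, Submodule.span_le]
  rintro _ ⟨_, ⟨i, rfl⟩, rfl⟩
  simpa using mk_tprod_basis_mem_span_mkJ b i

variable (S d) in
def qpowBasis : Module.Basis (seqJset S n d) K (Qpow S E d) :=
  .mk (linearIndependent_mkJ b) (span_mkJ_eq_top b).ge

lemma qpowBasis_apply (j : seqJset S n d) :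
    qpowBasis S d b j = Submodule.Quotient.mk (tprod K fun t => b (j.1 t)) :=
  Module.Basis.mk_apply _ _ _

variable (S) in
def semiAlgBasis : Module.Basis (Σ d, seqJset S n d) K (SemiAlg S E) :=
  DFinsupp.basis fun d => qpowBasis S d b

lemma semiAlgBasis_apply (p : Σ d, seqJset S n d) :
    semiAlgBasis S b p = decEl S p.1 fun t => b (p.2.1 t) := by
  rw [semiAlgBasis, DFinsupp.basis_apply, qpowBasis_apply]
  rfl

end OmegaSeq

/-- Corollary II.10. Suppose `K` is a `ℚ`-algebra and an
integral domain, `χ` is `ω`-invariant and `E` is free with basis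
`(e_ℓ)_{ℓ=1}^n`. Then (i) `(e_j)_{j ∈ J(χ,n)}` is a basis of the
semi-symmetric algebra `[χ](E)`; (ii) for `j ∈ J(χ_d,n,d)`,
`k ∈ J(χ_e,n,e)`, the multiplication (= concatenation of decomposables)
satisfies `e_j · e_k = 0` if `(j,k) ∈ I₀(χ_{d+e},n,d+e)` and
`e_j · e_k = ζ(j,k) e_{ℓm(j,k)}` if `(j,k) ∈ I(χ_{d+e},n,d+e)`. -/
theorem semiAlg_basis_and_mul {K : Type*} [CommRing K] [Algebra ℚ K] [IsDomain K]
    (S : OmegaSeq K) {E : Type*} [AddCommGroup E] [Module K E]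
    {n : ℕ} (b : Module.Basis (Fin n) K E)
    (mul : SemiAlg S E →ₗ[K] SemiAlg S E →ₗ[K] SemiAlg S E)
    (hmul : ∀ (d e : ℕ) (u : Fin d → E) (v : Fin e → E),
      mul (decEl S d u) (decEl S e v) = decEl S (d + e) (Fin.append u v)) :
    (∃ B : Module.Basis (Σ d : ℕ, {j : Fin d → Fin n // j ∈ seqJset S n d}) K (SemiAlg S E),
      ∀ p, B p = decEl S p.1 (fun t => b (p.2.1 t))) ∧
    (∀ (d e : ℕ) (j : Fin d → Fin n) (k : Fin e → Fin n),
      j ∈ seqJset S n d → k ∈ seqJset S n e →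
      (¬ seqStabTriv S n (d + e) (Fin.append j k) →
        mul (decEl S d (fun t => b (j t))) (decEl S e (fun t => b (k t))) = 0) ∧
      (seqStabTriv S n (d + e) (Fin.append j k) →
        ∀ (σ : S.W (d + e)) (i' : Fin (d + e) → Fin n),
          Fin.append j k ∘ ⇑((rAct S (d + e) σ)⁻¹) = i' →
          (∀ τ : S.W (d + e), ¬ lexLT (i' ∘ ⇑((rAct S (d + e) τ)⁻¹)) i') →
          mul (decEl S d (fun t => b (j t))) (decEl S e (fun t => b (k t)))
            = ((S.χ (d + e) σ : Kˣ) : K) • decEl S (d + e) (fun t => b (i' t)))) := by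
  refine ⟨⟨S.semiAlgBasis b, OmegaSeq.semiAlgBasis_apply b⟩,
    fun d e j k _ _ => ⟨fun hjk => ?_, ?_⟩⟩
  · rw [hmul, Fin.append_comp, OmegaSeq.decEl_basis_eq_zero b hjk]
  · rintro - σ i' rfl -
    rw [hmul, Fin.append_comp, OmegaSeq.decEl_basis_eq_smul b σ]
    rfl
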